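/- arXiv:2004.07558 — 5 statements merged into one kernel-verified Lean document; each statement's English description precedes it below -/
import Mathlib

section
/- Let k be a positive integer and let S_k = { i/k + 1/(2k^2) : i ∈ {1,…,k} }. If R ⊆ S_k is a subset whose sum x = Σ_{r∈R} r again lies in S_k, then R = {x}, i.e., R is the singleton containing x. -/
/-!
Write the elements of `S_k` as `(2k i + 1) / (2k²)`. A sum of `n` of them has numerator
`2k (Σ i) + n`, so if it lies in `S_k` then `n ≡ 1 (mod 2k)`; since `n ≤ k < 2k`, this forces `n = 1`.
-/

open Finset

def cornerAngle (k i : ℕ) : ℚ := i / k + 1 / (2 * k ^ 2)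

lemma cornerAngle_injective {k : ℕ} (hk : k ≠ 0) : Function.Injective (cornerAngle k) := by
  intro a b hab
  have hk' : (k : ℚ) ≠ 0 := Nat.cast_ne_zero.mpr hk
  have : (a : ℚ) / k = b / k := by simpa only [cornerAngle, add_left_inj] using hab
  exact_mod_cast (div_left_inj' hk').mp this

lemma sum_cornerAngle (k : ℕ) (T : Finset ℕ) :
    ∑ i ∈ T, cornerAngle k i = (∑ i ∈ T, (i : ℚ)) / k + #T / (2 * k ^ 2) := by
  simp only [cornerAngle, sum_add_distrib, sum_div, sum_const, nsmul_eq_mul, mul_one_div]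

lemma numerator_eq_of_sum_cornerAngle_eq {k j : ℕ} {T : Finset ℕ} (hk : k ≠ 0)
    (h : ∑ i ∈ T, cornerAngle k i = cornerAngle k j) :
    (∑ i ∈ T, i) * (2 * k) + #T = j * (2 * k) + 1 := by
  have hk' : (k : ℚ) ≠ 0 := Nat.cast_ne_zero.mpr hk
  rw [sum_cornerAngle, cornerAngle] at h
  field_simp at h
  have : (((∑ i ∈ T, i) * (2 * k) + #T : ℕ) : ℚ) = (j * (2 * k) + 1 : ℕ) := by
    push_cast
    linear_combination h
  exact_mod_cast this

lemma card_eq_one_of_sum_cornerAngle_eq {k j : ℕ} {T : Finset ℕ} (hT : T ⊆ Icc 1 k)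
    (hk : k ≠ 0) (h : ∑ i ∈ T, cornerAngle k i = cornerAngle k j) : #T = 1 := by
  have hcard : #T ≤ k := by simpa using card_le_card hT
  have hmod := congrArg (· % (2 * k)) (numerator_eq_of_sum_cornerAngle_eq hk h)
  simpa only [Nat.mul_add_mod_of_lt (show #T < 2 * k by omega),
    Nat.mul_add_mod_of_lt (show 1 < 2 * k by omega)] using hmod

theorem stmt0_general (k : ℕ)
    (S : Finset ℚ)
    (hS : S = (Finset.Icc 1 k).image (fun i : ℕ => (i : ℚ) / k + 1 / (2 * k ^ 2)))
    (R : Finset ℚ) (hR : R ⊆ S)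
    (x : ℚ) (hx : x = ∑ r ∈ R, r) (hxS : x ∈ S) :
    R = {x} := by
  change S = (Icc 1 k).image (cornerAngle k) at hS
  subst hS hx
  obtain ⟨j, hj, hjx⟩ := mem_image.mp hxS
  have hk : k ≠ 0 := by have := mem_Icc.mp hj; omega
  obtain ⟨T, hT, rfl⟩ := subset_image_iff.mp hR
  rw [sum_image fun a _ b _ hab => cornerAngle_injective hk hab] at hjx ⊢
  obtain ⟨i, rfl⟩ := card_eq_one.mp (card_eq_one_of_sum_cornerAngle_eq hT hk hjx.symm)
  simp

/-- Unique angles lemma: if the sum of a subset `R` of `S_k` again lies in `S_k`,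
then `R` is a singleton containing that sum. -/
theorem stmt0 (k : ℕ) (hk : 0 < k)
    (S : Finset ℚ)
    (hS : S = (Finset.Icc 1 k).image (fun i : ℕ => (i : ℚ) / k + 1 / (2 * k ^ 2)))
    (R : Finset ℚ) (hR : R ⊆ S)
    (x : ℚ) (hx : x = ∑ r ∈ R, r) (hxS : x ∈ S) :
    R = {x} :=
  stmt0_general k S hS R hR x hx hxS
end

section
/- Any number in S_k is at distance at least 1/(2k^2) from the sum of any nonempty subset of S_k \ {x} of size at least 2. More precisely: for any R ⊆ S_k with |R| = m and m ≠ 1, the sum Σ_{r∈R} r is not in S_k, since it has the form j/k + m/(2k^2) for some natural number j, and such a number lies in S_k only when m = 1. -/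
/-!
Every element of `S_k` is `i/k + 1/(2k²)`, so a sum of `m` distinct elements is `j/k + m/(2k²)`
with `j` the sum of the indices. If it were `i/k + 1/(2k²)`, clearing denominators gives
`2kj + m = 2ki + 1`, so `m ≡ 1 (mod 2k)`; as `m ≤ k < 2k`, this forces `m = 1`.
-/

open Finset

lemma sum_natCast_div_add_const (T : Finset ℕ) (k : ℕ) (c : ℚ) :
    ∑ i ∈ T, ((i : ℚ) / k + c) = ((∑ i ∈ T, i : ℕ) : ℚ) / k + #T * c := by
  rw [sum_add_distrib, sum_const, nsmul_eq_mul, ← sum_div, Nat.cast_sum]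

lemma injOn_natCast_div_add_const (k : ℕ) (c : ℚ) :
    Set.InjOn (fun i : ℕ => (i : ℚ) / k + c) (Icc 1 k) := by
  intro a ha b _ hab
  have hk : (k : ℚ) ≠ 0 := by
    have := mem_Icc.1 ha
    exact_mod_cast (by omega : k ≠ 0)
  simpa [div_left_inj' hk] using hab

lemma eq_one_of_natCast_div_add_eq {k i j m : ℕ} (hk : 0 < k) (hmk : m ≤ k)
    (h : (j : ℚ) / k + m / (2 * k ^ 2) = i / k + 1 / (2 * k ^ 2)) : m = 1 := by
  have hkQ : (k : ℚ) ≠ 0 := by positivity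
  have key : m + 2 * k * j = 1 + 2 * k * i := by
    field_simp at h
    have : ((m + 2 * k * j : ℕ) : ℚ) = ((1 + 2 * k * i : ℕ) : ℚ) := by
      push_cast
      linear_combination h
    exact_mod_cast this
  have hmod := congrArg (· % (2 * k)) key
  simp only [Nat.add_mul_mod_self_left] at hmod
  rwa [Nat.mod_eq_of_lt (by omega), Nat.mod_eq_of_lt (by omega)] at hmod

theorem stmt1_general (k : ℕ)
    (S : Finset ℚ)
    (hS : S = (Finset.Icc 1 k).image (fun i : ℕ => (i : ℚ) / k + 1 / (2 * k ^ 2)))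
    (R : Finset ℚ) (hR : R ⊆ S)
    (m : ℕ) (hm : m = R.card) (hm1 : m ≠ 1) :
    (∃ j : ℕ, ∑ r ∈ R, r = (j : ℚ) / k + (m : ℚ) / (2 * k ^ 2)) ∧
      ∑ r ∈ R, r ∉ S := by
  subst hS
  obtain ⟨T, hT, rfl⟩ := subset_image_iff.mp hR
  have hinj := (injOn_natCast_div_add_const k (1 / (2 * k ^ 2))).mono hT
  rw [card_image_of_injOn hinj] at hm
  subst hm
  rw [sum_image hinj, sum_natCast_div_add_const, mul_one_div]
  refine ⟨⟨_, rfl⟩, ?_⟩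
  rw [mem_image]
  rintro ⟨i, hi, hsum⟩
  have hTk : #T ≤ k := by simpa using card_le_card hT
  have hik := mem_Icc.1 hi
  exact hm1 (eq_one_of_natCast_div_add_eq (by omega) hTk hsum.symm)

/-- The sum of `m ≠ 1` elements of `S_k` has the form `j/k + m/(2k²)` and is not in `S_k`. -/
theorem stmt1 (k : ℕ) (hk : 0 < k)
    (S : Finset ℚ)
    (hS : S = (Finset.Icc 1 k).image (fun i : ℕ => (i : ℚ) / k + 1 / (2 * k ^ 2)))
    (R : Finset ℚ) (hR : R ⊆ S)
    (m : ℕ) (hm : m = R.card) (hm1 : m ≠ 1) :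
    (∃ j : ℕ, ∑ r ∈ R, r = (j : ℚ) / k + (m : ℚ) / (2 * k ^ 2)) ∧
      ∑ r ∈ R, r ∉ S :=
  stmt1_general k S hS R hR m hm hm1
end

section
/- Let g(x,y) = p(x,y)/q(x,y) where p and q are bivariate quadratics with constant terms a₆, b₆ > 0 and all non-constant coefficients in [−c, c] for some c ≥ 0. Given ε > 0, if δ ∈ [0,1] satisfies δ ≤ ε·b₆²/(5c·(a₆ + (1+ε)·b₆)), a₆ > 5cδ, and b₆ > 5cδ, then for all x, y ∈ [−δ, δ] we have g(x,y) ∈ [a₆/b₆ − ε, a₆/b₆ + ε]. -/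
/-! Write `p = a₆ + P` and `q = b₆ + Q`. On the square `|x|, |y| ≤ δ ≤ 1` each of the five
monomials `x², xy, y², x, y` has absolute value at most `δ`, so `|P|, |Q| ≤ 5cδ =: t`. Then
`p/q - a₆/b₆ = (b₆ P - a₆ Q) / (q b₆)` has numerator at most `(a₆ + b₆) t` and denominator at
least `(b₆ - t) b₆`, and the hypothesis on `δ` is exactly `t (a₆ + (1 + ε) b₆) ≤ ε b₆²`. -/

lemma abs_mul_le_of_abs_le_of_le_one {x y δ : ℝ} (hx : |x| ≤ δ) (hy : |y| ≤ δ) (hδ : δ ≤ 1) :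
    |x * y| ≤ δ := by
  rw [abs_mul]
  nlinarith [abs_nonneg x, abs_nonneg y]

lemma abs_mul_le_of_mem_Icc {a m c δ : ℝ} (ha : a ∈ Set.Icc (-c) c) (hm : |m| ≤ δ) :
    |a * m| ≤ c * δ := by
  have ha' : |a| ≤ c := abs_le.mpr ha
  rw [abs_mul]
  exact mul_le_mul ha' hm (abs_nonneg m) ((abs_nonneg a).trans ha')

lemma abs_quadratic_sub_const_le {a₁ a₂ a₃ a₄ a₅ a₆ c δ x y : ℝ}
    (ha₁ : a₁ ∈ Set.Icc (-c) c) (ha₂ : a₂ ∈ Set.Icc (-c) c) (ha₃ : a₃ ∈ Set.Icc (-c) c)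
    (ha₄ : a₄ ∈ Set.Icc (-c) c) (ha₅ : a₅ ∈ Set.Icc (-c) c)
    (hδ : δ ≤ 1) (hx : |x| ≤ δ) (hy : |y| ≤ δ) :
    |a₁ * x ^ 2 + a₂ * x * y + a₃ * y ^ 2 + a₄ * x + a₅ * y + a₆ - a₆| ≤ 5 * c * δ := by
  have hx₂ : |x ^ 2| ≤ δ := pow_two x ▸ abs_mul_le_of_abs_le_of_le_one hx hx hδ
  have hy₂ : |y ^ 2| ≤ δ := pow_two y ▸ abs_mul_le_of_abs_le_of_le_one hy hy hδ
  have h₁ := abs_le.mp <| abs_mul_le_of_mem_Icc ha₁ hx₂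
  have h₂ := abs_le.mp <| abs_mul_le_of_mem_Icc ha₂ (abs_mul_le_of_abs_le_of_le_one hx hy hδ)
  have h₃ := abs_le.mp <| abs_mul_le_of_mem_Icc ha₃ hy₂
  have h₄ := abs_le.mp <| abs_mul_le_of_mem_Icc ha₄ hx
  have h₅ := abs_le.mp <| abs_mul_le_of_mem_Icc ha₅ hy
  rw [abs_le, mul_assoc a₂]
  constructor <;> linarith

lemma abs_div_sub_div_le {a b u v t ε : ℝ} (ha : 0 ≤ a) (hb : 0 < b) (hε : 0 ≤ ε)
    (hu : |u - a| ≤ t) (hv : |v - b| ≤ t) (htb : t < b)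
    (ht : t * (a + (1 + ε) * b) ≤ ε * b ^ 2) :
    |u / v - a / b| ≤ ε := by
  have hv_lower : b - t ≤ v := by linarith [(abs_le.mp hv).1]
  have hv₀ : 0 < v := by linarith
  rw [div_sub_div _ _ hv₀.ne' hb.ne', abs_div, abs_of_pos (mul_pos hv₀ hb),
    div_le_iff₀ (mul_pos hv₀ hb)]
  calc |u * b - v * a| = |b * (u - a) - a * (v - b)| := by congr 1; ring
    _ ≤ b * t + a * t := by
      refine (abs_sub _ _).trans (add_le_add ?_ ?_) <;>
        rw [abs_mul, abs_of_nonneg (by positivity)] <;> gcongr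
    _ ≤ ε * (v * b) := by
      nlinarith [mul_le_mul_of_nonneg_left hv_lower (mul_nonneg hε hb.le)]

theorem stmt4_general (a₁ a₂ a₃ a₄ a₅ a₆ b₁ b₂ b₃ b₄ b₅ b₆ c δ ε : ℝ)
    (ha₆ : 0 < a₆) (hb₆ : 0 < b₆) (hc : 0 ≤ c) (hε : 0 < ε)
    (ha₁ : a₁ ∈ Set.Icc (-c) c) (ha₂ : a₂ ∈ Set.Icc (-c) c) (ha₃ : a₃ ∈ Set.Icc (-c) c)
    (ha₄ : a₄ ∈ Set.Icc (-c) c) (ha₅ : a₅ ∈ Set.Icc (-c) c)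
    (hb₁ : b₁ ∈ Set.Icc (-c) c) (hb₂ : b₂ ∈ Set.Icc (-c) c) (hb₃ : b₃ ∈ Set.Icc (-c) c)
    (hb₄ : b₄ ∈ Set.Icc (-c) c) (hb₅ : b₅ ∈ Set.Icc (-c) c)
    (hδ : δ ∈ Set.Icc (0 : ℝ) 1)
    (hδε : δ ≤ ε * b₆ ^ 2 / (5 * c * (a₆ + (1 + ε) * b₆)))
    (hB : 5 * c * δ < b₆) :
    ∀ x y : ℝ, x ∈ Set.Icc (-δ) δ → y ∈ Set.Icc (-δ) δ →
      (a₁ * x ^ 2 + a₂ * x * y + a₃ * y ^ 2 + a₄ * x + a₅ * y + a₆) /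
          (b₁ * x ^ 2 + b₂ * x * y + b₃ * y ^ 2 + b₄ * x + b₅ * y + b₆) ∈
        Set.Icc (a₆ / b₆ - ε) (a₆ / b₆ + ε) := by
  intro x y hx hy
  rw [Set.mem_Icc, ← abs_le] at hx hy
  have hsmall : 5 * c * δ * (a₆ + (1 + ε) * b₆) ≤ ε * b₆ ^ 2 := by
    rcases hc.eq_or_lt with rfl | hc
    · simp only [mul_zero, zero_mul]; positivity
    · calc 5 * c * δ * (a₆ + (1 + ε) * b₆) = δ * (5 * c * (a₆ + (1 + ε) * b₆)) := by ring
        _ ≤ ε * b₆ ^ 2 := (le_div_iff₀ (by positivity)).mp hδε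
  rw [← Set.mem_Icc_iff_abs_le, abs_sub_comm]
  exact abs_div_sub_div_le ha₆.le hb₆ hε.le
    (abs_quadratic_sub_const_le ha₁ ha₂ ha₃ ha₄ ha₅ hδ.2 hx hy)
    (abs_quadratic_sub_const_le hb₁ hb₂ hb₃ hb₄ hb₅ hδ.2 hx hy) hB hsmall

/-- Core value lemma, case (b): the quotient of two quadratics with small inputs
is within `ε` of the quotient of their constant terms. -/
theorem stmt4 (a₁ a₂ a₃ a₄ a₅ a₆ b₁ b₂ b₃ b₄ b₅ b₆ c δ ε : ℝ)
    (ha₆ : 0 < a₆) (hb₆ : 0 < b₆) (hc : 0 ≤ c) (hε : 0 < ε)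
    (ha₁ : a₁ ∈ Set.Icc (-c) c) (ha₂ : a₂ ∈ Set.Icc (-c) c) (ha₃ : a₃ ∈ Set.Icc (-c) c)
    (ha₄ : a₄ ∈ Set.Icc (-c) c) (ha₅ : a₅ ∈ Set.Icc (-c) c)
    (hb₁ : b₁ ∈ Set.Icc (-c) c) (hb₂ : b₂ ∈ Set.Icc (-c) c) (hb₃ : b₃ ∈ Set.Icc (-c) c)
    (hb₄ : b₄ ∈ Set.Icc (-c) c) (hb₅ : b₅ ∈ Set.Icc (-c) c)
    (hδ : δ ∈ Set.Icc (0 : ℝ) 1)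
    (hδε : δ ≤ ε * b₆ ^ 2 / (5 * c * (a₆ + (1 + ε) * b₆)))
    (hA : 5 * c * δ < a₆) (hB : 5 * c * δ < b₆) :
    ∀ x y : ℝ, x ∈ Set.Icc (-δ) δ → y ∈ Set.Icc (-δ) δ →
      (a₁ * x ^ 2 + a₂ * x * y + a₃ * y ^ 2 + a₄ * x + a₅ * y + a₆) /
          (b₁ * x ^ 2 + b₂ * x * y + b₃ * y ^ 2 + b₄ * x + b₅ * y + b₆) ∈
        Set.Icc (a₆ / b₆ - ε) (a₆ / b₆ + ε) :=
  stmt4_general a₁ a₂ a₃ a₄ a₅ a₆ b₁ b₂ b₃ b₄ b₅ b₆ c δ ε ha₆ hb₆ hc hε ha₁ ha₂ ha₃ ha₄ ha₅ hb₁ hb₂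
    hb₃ hb₄ hb₅ hδ hδε hB
end

section
/- Let e, f, g be points in the plane with f ≠ e ≠ g, and let e⁻ be a point whose distance to the segment ef and to the segment eg are each at most s. If θ ∈ (0, π) is the angle between ef and eg at e, then ‖e − e⁻‖ ≤ s / sin(θ/2). -/
/-!
By the triangle inequality for angles, `∠ f e g ≤ ∠ f e e' + ∠ e' e g`, so `e' - e` makes an angle
of at least `θ / 2` with one of the two edges. If that angle at `e` is at least `α ≤ π / 2`, the
distance from `e'` to the edge is at least `dist e e' * sin α`, by expanding `‖v - t w‖²`.
-/

open EuclideanGeometry Real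

namespace InnerProductGeometry

variable {V : Type*} [NormedAddCommGroup V] [InnerProductSpace ℝ V]

theorem norm_mul_sin_le_norm_sub_of_le_angle {v w : V} {α : ℝ} (hα : 0 ≤ α)
    (hαvw : α ≤ angle v w) : ‖v‖ * sin α ≤ ‖v - w‖ := by
  have hcos : cos (angle v w) ≤ cos α :=
    cos_le_cos_of_nonneg_of_le_pi hα (angle_le_pi v w) hαvw
  have hinner : inner ℝ v w ≤ ‖v‖ * ‖w‖ * cos α := by
    rw [← cos_angle_mul_norm_mul_norm, mul_comm]
    exact mul_le_mul_of_nonneg_left hcos (by positivity)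
  -- `‖v - w‖² ≥ ‖v‖² - 2 ‖v‖ ‖w‖ cos α + ‖w‖² = (‖w‖ - ‖v‖ cos α)² + (‖v‖ sin α)²`
  have hsq : (‖v‖ * sin α) ^ 2 ≤ ‖v - w‖ ^ 2 := by
    rw [norm_sub_sq_real]
    nlinarith [sq_nonneg (‖w‖ - ‖v‖ * cos α), sin_sq_add_cos_sq α]
  exact (abs_le_of_sq_le_sq' hsq (norm_nonneg _)).2

end InnerProductGeometry

namespace EuclideanGeometry

variable {V : Type*} [NormedAddCommGroup V] [InnerProductSpace ℝ V]

theorem dist_mul_sin_le_infDist_segment {e f p : V} {α : ℝ} (hα : 0 ≤ α) (hαπ : α ≤ π / 2)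
    (hαp : α ≤ ∠ p e f) : dist e p * sin α ≤ Metric.infDist p (segment ℝ e f) := by
  refine (Metric.le_infDist ⟨e, left_mem_segment ℝ e f⟩).2 ?_
  rw [segment_eq_image']
  rintro _ ⟨t, ⟨ht0, -⟩, rfl⟩
  have hangle : α ≤ InnerProductGeometry.angle (p - e) (t • (f - e)) := by
    rcases ht0.eq_or_lt with rfl | ht
    -- the apex `t = 0`: Mathlib's angle with the zero vector is `π / 2`
    · simpa [InnerProductGeometry.angle_zero_right] using hαπ
    · rwa [InnerProductGeometry.angle_smul_right_of_pos _ _ ht]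
  calc dist e p * sin α = ‖p - e‖ * sin α := by rw [dist_comm, dist_eq_norm]
    _ ≤ ‖p - e - t • (f - e)‖ :=
      InnerProductGeometry.norm_mul_sin_le_norm_sub_of_le_angle hα hangle
    _ = dist p (e + t • (f - e)) := by rw [dist_eq_norm, sub_sub]

end EuclideanGeometry

theorem stmt13_general (e f g e' : EuclideanSpace ℝ (Fin 2)) (s θ : ℝ)
    (hθ : θ = EuclideanGeometry.angle f e g) (hθ0 : 0 < θ)
    (hd1 : Metric.infDist e' (segment ℝ e f) ≤ s)
    (hd2 : Metric.infDist e' (segment ℝ e g) ≤ s) :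
    dist e e' ≤ s / Real.sin (θ / 2) := by
  have hθπ : θ ≤ π := hθ ▸ angle_le_pi f e g
  have hsin : 0 < sin (θ / 2) := sin_pos_of_pos_of_lt_pi (by linarith) (by linarith [pi_pos])
  have hhalf : θ / 2 ≤ π / 2 := by linarith
  have hsplit : θ ≤ ∠ e' e f + ∠ e' e g := by
    rw [hθ, angle_comm e' e f]
    exact angle_le_angle_add_angle e f e' g
  rw [le_div_iff₀ hsin]
  rcases le_or_gt (θ / 2) (∠ e' e f) with hf | hf
  · exact (dist_mul_sin_le_infDist_segment (by linarith) hhalf hf).trans hd1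
  · exact (dist_mul_sin_le_infDist_segment (by linarith) hhalf (by linarith)).trans hd2

/-- Offset distance lemma, part (2): a point whose distance to each of the segments
`ef` and `eg` is at most `s` is at distance at most `s / sin(θ/2)` from the apex `e`,
where `θ ∈ (0, π)` is the angle between `ef` and `eg` at `e`. -/
theorem stmt13 (e f g e' : EuclideanSpace ℝ (Fin 2)) (s θ : ℝ)
    (hs : 0 ≤ s) (hef : f ≠ e) (heg : g ≠ e)
    (hθ : θ = EuclideanGeometry.angle f e g) (hθ0 : 0 < θ) (hθπ : θ < Real.pi)
    (hd1 : Metric.infDist e' (segment ℝ e f) ≤ s)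
    (hd2 : Metric.infDist e' (segment ℝ e g) ≤ s) :
    dist e e' ≤ s / Real.sin (θ / 2) :=
  stmt13_general e f g e' s θ hθ hθ0 hd1 hd2
end

section
/- Suppose x, y, z ∈ ℝ satisfy the constraint system arising in the ETR-SHIFT multiplication simulation: given X = x+1, Y = y+1 ∈ ℝ, define P = X·Y; then P = xy + x + y + 1, and if additionally variables satisfy P + 1/2 = Q, A + (y + 3/4) = Q where A = xy + x + 3/4, A + 3/4 = B, and (z + 3/4) + (x + 3/4) = B, then z = x·y. -/
/-- Correctness of the shifted multiplication gadget of the ETR-SHIFT reduction: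
the chain of addition constraints together with `(x+1)(y+1) = P` forces `z = x·y`. -/
theorem stmt19 (x y z P Q A B : ℝ)
    (hP : P = (x + 1) * (y + 1))
    (hQ : P + 1 / 2 = Q)
    (hA : A = x * y + x + 3 / 4)
    (hAQ : A + (y + 3 / 4) = Q)
    (hB : A + 3 / 4 = B)
    (hzB : (z + 3 / 4) + (x + 3 / 4) = B) :
    P = x * y + x + y + 1 ∧ z = x * y := by
  constructor <;> nlinarith [hP, hQ, hA, hAQ, hB, hzB]
end
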